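/- arXiv:2212.01848 — 2 statements merged into one kernel-verified Lean document; each statement's English description precedes it below -/
import Mathlib

section
/- Let f_1, …, f_P : ℝ^n → ℝ be continuously differentiable and suppose there is L > 0 such that each gradient ∇f_p is L-Lipschitz continuous; set f = ∑_{p=1}^P f_p. Let {w^k} ⊂ ℝ^n be a bounded sequence and {ζ^k} ⊂ (0, ∞) with ζ^k → 0. For each k let (h_1^k, …, h_P^k) be a permutation of {1, …, P}, define w̃_0^k = w^k and w̃_i^k = w̃_{i−1}^k − ζ^k ∇f_{h_i^k}(w̃_{i−1}^k) for i = 1, …, P. Then for every limit point w̄ of {w^k} there exists a strictly increasing map φ : ℕ → ℕ with w^{φ(k)} → w̄ such that the gradient approximation error vanishes along it: ‖∇f(w^{φ(k)}) − ∑_{i=1}^P ∇f_{h_i^{φ(k)}}(w̃_{i−1}^{φ(k)})‖ → 0 as k → ∞. -/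
/-!
Along a subsequence `w^{ψ k} → w̄`, the stepsizes vanish and the gradients are continuous, so by
induction on `i` every inner iterate `w̃_i^{ψ k}` also tends to `w̄`. Because `(h_i^k)_i` is a
permutation, `∇f(w^k)` is the epoch sum with every gradient evaluated at `w^k`, so the error is a
sum of `P` differences `∇f_{h_i}(w^{ψ k}) - ∇f_{h_i}(w̃_{i-1}^{ψ k})`, each tending to `0`. That the
sample order depends on `k` is harmless: there are only finitely many components to choose from.
-/

open Filter Finset Topology

section Gradient

variable {F : Type*} [NormedAddCommGroup F] [InnerProductSpace ℝ F] [CompleteSpace F]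

theorem gradient_fun_sum {ι : Type*} {s : Finset ι} {f : ι → F → ℝ} {x : F}
    (hf : ∀ i ∈ s, DifferentiableAt ℝ (f i) x) :
    gradient (fun y => ∑ i ∈ s, f i y) x = ∑ i ∈ s, gradient (f i) x := by
  simp only [gradient, fderiv_fun_sum hf, map_sum]

theorem ContDiff.continuous_gradient {f : F → ℝ} (hf : ContDiff ℝ 1 f) :
    Continuous (gradient f) :=
  (InnerProductSpace.toDual ℝ F).symm.continuous.comp (hf.continuous_fderiv one_ne_zero)

end Gradient

theorem tendsto_selection_zero {α ι E : Type*} [Fintype ι] [SeminormedAddCommGroup E]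
    {l : Filter α} {F : ι → α → E} (hF : ∀ p, Tendsto (F p) l (𝓝 0)) (j : α → ι) :
    Tendsto (fun k => F (j k) k) l (𝓝 0) := by
  have hpi : Tendsto (fun k p => F p k) l (𝓝 0) := tendsto_pi_nhds.2 hF
  exact squeeze_zero_norm (fun k => norm_le_pi_norm (fun p => F p k) (j k))
    (by simpa using hpi.norm)

section IncrementalGradient

variable {α ι E : Type*} [Fintype ι] [NormedAddCommGroup E] [NormedSpace ℝ E] {l : Filter α}
  {g : ι → E → E} {ζ : α → ℝ} {j : α → ℕ → ι} {x : α → ℕ → E} {N : ℕ} {a : E}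

theorem tendsto_incremental_iterate (hg : ∀ p, Continuous (g p)) (hζ : Tendsto ζ l (𝓝 0))
    (hstep : ∀ k, ∀ i < N, x k (i + 1) = x k i - ζ k • g (j k i) (x k i))
    (hx₀ : Tendsto (fun k => x k 0) l (𝓝 a)) :
    ∀ i ≤ N, Tendsto (fun k => x k i) l (𝓝 a) := by
  intro i
  induction i with
  | zero => exact fun _ => hx₀
  | succ i ih =>
    intro hi
    have hxi := ih (by omega)
    have hstep_small : Tendsto (fun k => ζ k • g (j k i) (x k i)) l (𝓝 0) :=
      tendsto_selection_zero
        (fun p => by simpa using hζ.smul (((hg p).tendsto a).comp hxi)) (fun k => j k i)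
    simpa only [hstep _ i (by omega), sub_zero] using hxi.sub hstep_small

theorem tendsto_incremental_error (hg : ∀ p, Continuous (g p)) (hζ : Tendsto ζ l (𝓝 0))
    (hstep : ∀ k, ∀ i < N, x k (i + 1) = x k i - ζ k • g (j k i) (x k i))
    (hx₀ : Tendsto (fun k => x k 0) l (𝓝 a)) :
    Tendsto (fun k => ∑ i ∈ range N, (g (j k i) (x k 0) - g (j k i) (x k i))) l (𝓝 0) := by
  have hterm : ∀ i ∈ range N,
      Tendsto (fun k => g (j k i) (x k 0) - g (j k i) (x k i)) l (𝓝 0) := fun i hi => by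
    have hxi := tendsto_incremental_iterate hg hζ hstep hx₀ i (mem_range.1 hi).le
    refine tendsto_selection_zero (F := fun p k => g p (x k 0) - g p (x k i))
      (fun p => ?_) (fun k => j k i)
    simpa using (((hg p).tendsto a).comp hx₀).sub (((hg p).tendsto a).comp hxi)
  simpa using tendsto_finsetSum (range N) hterm

end IncrementalGradient

theorem stmt_3_general {n P : ℕ}
    (f : Fin P → EuclideanSpace ℝ (Fin n) → ℝ)
    (hf : ∀ p, ContDiff ℝ 1 (f p))
    (w : ℕ → EuclideanSpace ℝ (Fin n))
    (ζ : ℕ → ℝ)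
    (hζto0 : Tendsto ζ atTop (nhds 0))
    (h : ℕ → ℕ → Fin P)
    (hperm : ∀ k, Function.Bijective (fun i : Fin P => h k i.val))
    (wt : ℕ → ℕ → EuclideanSpace ℝ (Fin n))
    (hinit : ∀ k, wt k 0 = w k)
    (hiter : ∀ k, ∀ i, i < P →
      wt k (i + 1) = wt k i - ζ k • gradient (f (h k i)) (wt k i))
    (wbar : EuclideanSpace ℝ (Fin n))
    (hwbar : ∃ ψ : ℕ → ℕ, StrictMono ψ ∧
      Tendsto (fun k => w (ψ k)) atTop (nhds wbar)) :
    ∃ φ : ℕ → ℕ, StrictMono φ ∧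
      Tendsto (fun k => w (φ k)) atTop (nhds wbar) ∧
      Tendsto
        (fun k =>
          ‖gradient (fun x => ∑ p : Fin P, f p x) (w (φ k)) -
            ∑ i ∈ Finset.range P, gradient (f (h (φ k) i)) (wt (φ k) i)‖)
        atTop (nhds 0) := by
  obtain ⟨ψ, hψ, hwψ⟩ := hwbar
  have hgrad_sum : ∀ k, gradient (fun x => ∑ p : Fin P, f p x) (w k)
      = ∑ i ∈ range P, gradient (f (h k i)) (wt k 0) := fun k => by
    rw [gradient_fun_sum fun p _ => ((hf p).differentiable one_ne_zero).differentiableAt,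
      sum_range fun i => gradient (f (h k i)) (wt k 0),
      (hperm k).sum_comp fun p => gradient (f p) (wt k 0), hinit]
  refine ⟨ψ, hψ, hwψ, ?_⟩
  simp only [hgrad_sum, ← sum_sub_distrib]
  simpa using (tendsto_incremental_error (fun p => (hf p).continuous_gradient)
    (hζto0.comp hψ.tendsto_atTop) (fun k => hiter (ψ k)) (by simpa [hinit] using hwψ)).norm

/-- vanishing gradient-approximation error.
If `{w^k}` is bounded and `ζ^k → 0`, then for every limit point `w̄` of `{w^k}`
there is a subsequence `φ` with `w^{φ(k)} → w̄` along which the error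
`‖∇f(w^{φ(k)}) - ∑_{i=1}^P ∇f_{h_i^{φ(k)}}(w̃_{i-1}^{φ(k)})‖ → 0`,
where `f = ∑_{p=1}^P f_p`. -/
theorem stmt_3 {n P : ℕ}
    (f : Fin P → EuclideanSpace ℝ (Fin n) → ℝ)
    (hf : ∀ p, ContDiff ℝ 1 (f p))
    (L : ℝ) (hL : 0 < L)
    (hlip : ∀ p (u v : EuclideanSpace ℝ (Fin n)),
      ‖gradient (f p) u - gradient (f p) v‖ ≤ L * ‖u - v‖)
    (w : ℕ → EuclideanSpace ℝ (Fin n)) (hwbdd : ∃ C, ∀ k, ‖w k‖ ≤ C)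
    (ζ : ℕ → ℝ) (hζpos : ∀ k, 0 < ζ k)
    (hζto0 : Tendsto ζ atTop (nhds 0))
    (h : ℕ → ℕ → Fin P)
    (hperm : ∀ k, Function.Bijective (fun i : Fin P => h k i.val))
    (wt : ℕ → ℕ → EuclideanSpace ℝ (Fin n))
    (hinit : ∀ k, wt k 0 = w k)
    (hiter : ∀ k, ∀ i, i < P →
      wt k (i + 1) = wt k i - ζ k • gradient (f (h k i)) (wt k i))
    (wbar : EuclideanSpace ℝ (Fin n))
    (hwbar : ∃ ψ : ℕ → ℕ, StrictMono ψ ∧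
      Tendsto (fun k => w (ψ k)) atTop (nhds wbar)) :
    ∃ φ : ℕ → ℕ, StrictMono φ ∧
      Tendsto (fun k => w (φ k)) atTop (nhds wbar) ∧
      Tendsto
        (fun k =>
          ‖gradient (fun x => ∑ p : Fin P, f p x) (w (φ k)) -
            ∑ i ∈ Finset.range P, gradient (f (h (φ k) i)) (wt (φ k) i)‖)
        atTop (nhds 0) :=
  stmt_3_general f hf w ζ hζto0 h hperm wt hinit hiter wbar hwbar
end

section
/- Let f : ℝ^n → ℝ be bounded below and Lipschitz continuous with some constant L' > 0, let σ : [0,∞) → [0,∞) be a forcing function, and let M ∈ ℕ. Let {w^k} ⊂ ℝ^n and {R^k} ⊂ ℝ be sequences such that for every k: f(w^k) ≤ R^k ≤ max_{0 ≤ j ≤ min(k,M)} f(w^{k−j}) and f(w^{k+1}) ≤ R^k − σ(‖w^{k+1} − w^k‖). Then the sequence {f(w^k)} is convergent. -/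
/-!
The reference values `V k = max_{0 ≤ j ≤ min(k,M)} f(w^{k-j})` are nonincreasing, because
`f(w^{k+1}) ≤ V k`, and bounded below, so they converge to some `V`. Let `ℓ k ∈ [k - M, k]` be an
index at which the maximum `V k` is attained. By induction on `j`, `f(w^{ℓ k - j}) → V`: if this
holds for `j`, then `σ(‖w^{ℓ k - j} - w^{ℓ k - j - 1}‖) ≤ V (ℓ k - j - 1) - f(w^{ℓ k - j}) → 0`, so
the step length tends to `0` and, by Lipschitz continuity, so does the change of `f`. Every index
`k` is of the form `ℓ (k + M) - j` with `j ≤ M`, so finitely many of these sequences cover all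
of `f(w^k)`.
-/

open Filter Finset

/-- `refMax g M k = max_{0 ≤ j ≤ min(k,M)} g (k - j)`, the nonmonotone reference
maximum over the last `min(k,M)+1` values. -/
noncomputable def refMax (g : ℕ → ℝ) (M k : ℕ) : ℝ :=
  (Finset.range (min k M + 1)).sup' Finset.nonempty_range_add_one fun j => g (k - j)

open Topology

theorem Filter.Tendsto.apply_of_mem_finset {α ι X : Type*} [TopologicalSpace X] {l : Filter α}
    {u : ι → α → X} {x : X} {s : Finset ι} {d : α → ι} (hd : ∀ a, d a ∈ s)
    (hu : ∀ i ∈ s, Tendsto (u i) l (𝓝 x)) : Tendsto (fun a => u (d a) a) l (𝓝 x) := by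
  rw [tendsto_nhds]
  intro U hU hxU
  have hall : ∀ᶠ a in l, ∀ i ∈ s, u i a ∈ U :=
    (eventually_all_finset s).2 fun i hi => (hu i hi).eventually (IsOpen.mem_nhds hU hxU)
  filter_upwards [hall] with a ha using ha _ (hd a)

section refMax

variable {g c : ℕ → ℝ} {M : ℕ}

theorem le_refMax (g : ℕ → ℝ) (M k : ℕ) : g k ≤ refMax g M k :=
  le_sup' (fun j => g (k - j)) (mem_range.2 (Nat.succ_pos _))

theorem exists_le_le_refMax_eq (g : ℕ → ℝ) (M k : ℕ) :
    ∃ i, k - M ≤ i ∧ i ≤ k ∧ g i = refMax g M k := by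
  obtain ⟨j, hj, hmax⟩ := exists_mem_eq_sup' nonempty_range_add_one fun j => g (k - j)
  have hjM : j ≤ min k M := Nat.lt_succ_iff.1 (mem_range.1 hj)
  exact ⟨k - j, by omega, by omega, hmax.symm⟩

theorem refMax_succ_le (hdesc : ∀ k, g (k + 1) ≤ refMax g M k) (k : ℕ) :
    refMax g M (k + 1) ≤ refMax g M k := by
  refine sup'_le _ _ fun j hj => ?_
  rcases j with _ | j
  · exact hdesc k
  · have hj' : j ∈ range (min k M + 1) := mem_range.2 (by have := mem_range.1 hj; omega)
    show g (k + 1 - (j + 1)) ≤ refMax g M k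
    rw [Nat.add_sub_add_right]
    exact le_sup' (fun j => g (k - j)) hj'

theorem tendsto_refMax_iInf (hbdd : BddBelow (Set.range g))
    (hdesc : ∀ k, g (k + 1) ≤ refMax g M k) :
    Tendsto (refMax g M) atTop (𝓝 (⨅ k, refMax g M k)) := by
  obtain ⟨B, hB⟩ := hbdd
  refine tendsto_atTop_ciInf (antitone_nat_of_succ_le (refMax_succ_le hdesc)) ⟨B, ?_⟩
  rintro _ ⟨k, rfl⟩
  exact (hB ⟨k, rfl⟩).trans (le_refMax g M k)

theorem tendsto_comp_sub_of_le_refMax_sub {V : ℝ} (hV : Tendsto (refMax g M) atTop (𝓝 V))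
    (hc : ∀ k, 0 ≤ c k) (hdecr : ∀ k, g (k + 1) ≤ refMax g M k - c k)
    (hstep : ∀ φ : ℕ → ℕ, Tendsto (fun k => c (φ k)) atTop (𝓝 0) →
      Tendsto (fun k => g (φ k + 1) - g (φ k)) atTop (𝓝 0))
    {ℓ : ℕ → ℕ} (hℓ_ge : ∀ k, k - M ≤ ℓ k) (hℓ : ∀ k, g (ℓ k) = refMax g M k) (j : ℕ) :
    Tendsto (fun k => g (ℓ k - j)) atTop (𝓝 V) := by
  induction j with
  | zero => simpa [hℓ] using hV
  | succ j ih =>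
    set φ : ℕ → ℕ := fun k => ℓ k - (j + 1)
    have hφ : Tendsto φ atTop atTop :=
      (tendsto_sub_atTop_nat (j + 1)).comp
        (tendsto_atTop_mono hℓ_ge (tendsto_sub_atTop_nat M))
    have hφ_succ : ∀ᶠ k in atTop, φ k + 1 = ℓ k - j := by
      filter_upwards [eventually_ge_atTop (M + j + 1)] with k hk
      have := hℓ_ge k
      show ℓ k - (j + 1) + 1 = ℓ k - j
      omega
    have hnext : Tendsto (fun k => g (φ k + 1)) atTop (𝓝 V) :=
      ih.congr' (by filter_upwards [hφ_succ] with k hk; rw [hk])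
    have hcφ : Tendsto (fun k => c (φ k)) atTop (𝓝 0) := by
      refine squeeze_zero (fun k => hc (φ k)) (fun k => ?_) (by simpa using (hV.comp hφ).sub hnext)
      have := hdecr (φ k)
      linarith
    simpa using hnext.sub (hstep φ hcφ)

theorem exists_tendsto_of_le_refMax_sub (hbdd : BddBelow (Set.range g)) (hc : ∀ k, 0 ≤ c k)
    (hdecr : ∀ k, g (k + 1) ≤ refMax g M k - c k)
    (hstep : ∀ φ : ℕ → ℕ, Tendsto (fun k => c (φ k)) atTop (𝓝 0) →
      Tendsto (fun k => g (φ k + 1) - g (φ k)) atTop (𝓝 0)) :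
    ∃ l, Tendsto g atTop (𝓝 l) := by
  have hV := tendsto_refMax_iInf hbdd fun k => (hdecr k).trans (sub_le_self _ (hc k))
  choose ℓ hℓ_ge hℓ_le hℓ using exists_le_le_refMax_eq g M
  have hlag := tendsto_comp_sub_of_le_refMax_sub hV hc hdecr hstep hℓ_ge hℓ
  -- `k = ℓ (k + M) - (ℓ (k + M) - k)` with `ℓ (k + M) - k ≤ M`
  have hcover := Tendsto.apply_of_mem_finset (s := range (M + 1))
    (u := fun j k => g (ℓ (k + M) - j)) (d := fun k => ℓ (k + M) - k)
    (fun k => mem_range.2 (by have := hℓ_le (k + M); omega))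
    (fun j _ => (hlag j).comp (tendsto_add_atTop_nat M))
  refine ⟨_, hcover.congr fun k => ?_⟩
  have := hℓ_ge (k + M)
  rw [Nat.sub_sub_self (by omega)]

end refMax

theorem tendsto_sub_of_tendsto_forcing {E : Type*} [SeminormedAddCommGroup E] {f : E → ℝ}
    {L : ℝ} (hlip : ∀ u v, |f u - f v| ≤ L * ‖u - v‖) {σ : ℝ → ℝ}
    (hσforcing : ∀ t : ℕ → ℝ, (∀ k, 0 ≤ t k) →
      Tendsto (fun k => σ (t k)) atTop (𝓝 0) → Tendsto t atTop (𝓝 0))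
    (w : ℕ → E) (φ : ℕ → ℕ) (h : Tendsto (fun k => σ ‖w (φ k + 1) - w (φ k)‖) atTop (𝓝 0)) :
    Tendsto (fun k => f (w (φ k + 1)) - f (w (φ k))) atTop (𝓝 0) := by
  have hstep := hσforcing _ (fun k => norm_nonneg _) h
  exact squeeze_zero_norm (fun k => hlip _ _) (by simpa using hstep.const_mul L)

theorem stmt_12_general {n : ℕ}
    (f : EuclideanSpace ℝ (Fin n) → ℝ)
    (hbdd : BddBelow (Set.range f))
    (L' : ℝ)
    (hlip : ∀ u v : EuclideanSpace ℝ (Fin n), |f u - f v| ≤ L' * ‖u - v‖)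
    (σ : ℝ → ℝ) (hσnonneg : ∀ t, 0 ≤ t → 0 ≤ σ t)
    (hσforcing : ∀ t : ℕ → ℝ, (∀ k, 0 ≤ t k) →
      Tendsto (fun k => σ (t k)) atTop (nhds 0) → Tendsto t atTop (nhds 0))
    (M : ℕ)
    (w : ℕ → EuclideanSpace ℝ (Fin n)) (R : ℕ → ℝ)
    (hRhigh : ∀ k, R k ≤ refMax (fun k => f (w k)) M k)
    (hdecr : ∀ k, f (w (k + 1)) ≤ R k - σ ‖w (k + 1) - w k‖) :
    ∃ l : ℝ, Tendsto (fun k => f (w k)) atTop (nhds l) := by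
  exact exists_tendsto_of_le_refMax_sub (M := M) (c := fun k => σ ‖w (k + 1) - w k‖)
    (hbdd.mono (Set.range_comp_subset_range w f)) (fun k => hσnonneg _ (norm_nonneg _))
    (fun k => (hdecr k).trans (by linarith [hRhigh k]))
    (tendsto_sub_of_tendsto_forcing hlip hσforcing w)

/-- Lemma 1 from Grippo et al., part (iv).
If `f` is bounded below and Lipschitz, `σ` is a forcing function and the
sequence satisfies `f(w^k) ≤ R^k ≤ max_{0≤j≤min(k,M)} f(w^{k-j})` and
`f(w^{k+1}) ≤ R^k - σ(‖w^{k+1} - w^k‖)`, then `{f(w^k)}` converges. -/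
theorem stmt_12 {n : ℕ}
    (f : EuclideanSpace ℝ (Fin n) → ℝ)
    (hbdd : BddBelow (Set.range f))
    (L' : ℝ) (hL' : 0 < L')
    (hlip : ∀ u v : EuclideanSpace ℝ (Fin n), |f u - f v| ≤ L' * ‖u - v‖)
    (σ : ℝ → ℝ) (hσnonneg : ∀ t, 0 ≤ t → 0 ≤ σ t)
    (hσforcing : ∀ t : ℕ → ℝ, (∀ k, 0 ≤ t k) →
      Tendsto (fun k => σ (t k)) atTop (nhds 0) → Tendsto t atTop (nhds 0))
    (M : ℕ)
    (w : ℕ → EuclideanSpace ℝ (Fin n)) (R : ℕ → ℝ)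
    (hRlow : ∀ k, f (w k) ≤ R k)
    (hRhigh : ∀ k, R k ≤ refMax (fun k => f (w k)) M k)
    (hdecr : ∀ k, f (w (k + 1)) ≤ R k - σ ‖w (k + 1) - w k‖) :
    ∃ l : ℝ, Tendsto (fun k => f (w k)) atTop (nhds l) :=
  stmt_12_general f hbdd L' hlip σ hσnonneg hσforcing M w R hRhigh hdecr
end
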